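/- Equivalence of the moments of the relative particle number: let φ ∈ L²(ℝ³,ℂ) be normalized and for each N ≥ 2 let Ψ_N ∈ L²(ℝ^{3N},ℂ) with ‖Ψ_N‖ = 1. Then for all real numbers j, l > 0: if lim_{N→∞} ⟨Ψ_N, (n̂)^l Ψ_N⟩ = 0 then lim_{N→∞} ⟨Ψ_N, (n̂)^j Ψ_N⟩ = 0. In particular, lim_{N→∞} ‖n̂ Ψ_N‖ = 0 if and only if lim_{N→∞} ⟨Ψ_N, (n̂)^j Ψ_N⟩ = 0 for some (equivalently, for every) j > 0. -/

import Mathlib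

/-!
Splitting a configuration as `(x_j, rest)`, `p_j Ψ = φ(x_j) ⟨φ, Ψ(·, rest)⟩`, so `p_j` is an
orthogonal projection. For `i ≠ j`, `p_i` keeps the factor `φ(x_j)` of a function in the range of
`p_j`, so `p_j p_i p_j = p_i p_j`, and taking adjoints shows that the `p_j` commute. Hence the `P_k`
are orthogonal projections summing to the identity, and `⟨Ψ, (n̂)^γ Ψ⟩ = ∑ₖ (k/N)^{γ/2} ‖P_k Ψ‖²`
is the `γ/2`-th moment of the probability distribution `‖P_k Ψ‖²` on the points `k/N ∈ [0, 1]`.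
Such moments decrease in the exponent, and by the power-mean inequality the `a`-th one is at most
the `b`-th one to the power `a/b` when `a ≤ b`; so all of them tend to `0` together. Finally
`‖n̂ Ψ‖²` is the moment with `γ = 2`.
-/

open MeasureTheory Filter Finset Function
open scoped ENNReal ComplexConjugate Classical

noncomputable section

abbrev R3 : Type := EuclideanSpace ℝ (Fin 3)
abbrev NBody (N : ℕ) : Type := Fin N → R3
abbrev HN (N : ℕ) := Lp ℂ 2 (volume : Measure (NBody N))
abbrev H1 := Lp ℂ 2 (volume : Measure R3)
abbrev Op (N : ℕ) := HN N →L[ℂ] HN N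

/-- `IsCondProj N φ j P` says that `P` is the projector `p_j` onto `φ` in the `j`-th variable. -/
def IsCondProj (N : ℕ) (φ : H1) (j : Fin N) (P : Op N) : Prop :=
  ∀ Ψ : HN N, ∀ᵐ x : NBody N,
    P Ψ x = φ (x j) * ∫ y : R3, conj (φ y) * Ψ (Function.update x j y)

/-- `q_j := 1 - p_j`. -/
def qOp {N : ℕ} (p : Fin N → Op N) (j : Fin N) : Op N := 1 - p j

/-- the set of the last `j` particle indices. -/
def lastIdx (N j : ℕ) : Finset (Fin N) := Finset.univ.filter fun i => N - j ≤ (i : ℕ)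

/-- `P_{j,k}`. -/
def Pjk {N : ℕ} (p : Fin N → Op N) (j k : ℕ) : Op N :=
  ∑ S ∈ Finset.univ.filter (fun S : Finset (Fin N) => S ⊆ lastIdx N j ∧ S.card = k),
    (List.ofFn fun i : Fin N =>
      if i ∈ S then qOp p i else if i ∈ lastIdx N j then p i else 1).prod

/-- `P_k := P_{N,k}`. -/
def Pk {N : ℕ} (p : Fin N → Op N) (k : ℕ) : Op N := Pjk p N k

/-- `f̂ := ∑_{k=0}^N f(k) P_k`. -/
def fhat {N : ℕ} (p : Fin N → Op N) (f : ℕ → ℝ) : Op N :=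
  ∑ k ∈ Finset.range (N + 1), (f k : ℂ) • Pk p k

/-- `P_k` with integer index, `= 0` for `k < 0` or `k > N`. -/
def PkZ {N : ℕ} (p : Fin N → Op N) (k : ℤ) : Op N :=
  if 0 ≤ k ∧ k ≤ (N : ℤ) then Pk p k.toNat else 0

/-- the shifted operator `f̂_d := ∑_{j=d}^{N+d} f(j-d) P_j`. -/
def fhatShift {N : ℕ} (p : Fin N → Op N) (f : ℕ → ℝ) (d : ℤ) : Op N :=
  ∑ k ∈ Finset.range (N + 1), (f k : ℂ) • PkZ p ((k : ℤ) + d)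

/-- the weight `n(k) = √(k/N)`. -/
def nfun (N : ℕ) : ℕ → ℝ := fun k => Real.sqrt ((k : ℝ) / N)

/-- `m̂ := ∑_{k=1}^N m(k) P_k` for weights on `{1,…,N}`. -/
def mhat {N : ℕ} (p : Fin N → Op N) (m : ℕ → ℝ) : Op N :=
  ∑ k ∈ Finset.Icc 1 N, (m k : ℂ) • Pk p k

/-- symmetry of a wave function under permutations of the `N` particles. -/
def IsSymmetricWF (N : ℕ) (Ψ : HN N) : Prop :=
  ∀ σ : Equiv.Perm (Fin N), ∀ᵐ x : NBody N, Ψ (x ∘ σ) = Ψ x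

/-- `M` is the operator of multiplication by `F`. -/
def IsMulOp (N : ℕ) (F : NBody N → ℂ) (M : Op N) : Prop :=
  ∀ Ψ : HN N, ∀ᵐ x : NBody N, M Ψ x = F x * Ψ x

/-- the function defining the multiplication operator `h_{1,2}`. -/
def h12F (N : ℕ) (a : ℝ) (v : R3 → ℝ) (φf : R3 → ℂ) (j k : Fin N) : NBody N → ℂ :=
  fun x => ((((N : ℝ) - 1) * v (x j - x k)
    - a / 2 * ‖φf (x j)‖ ^ 2 - a / 2 * ‖φf (x k)‖ ^ 2 : ℝ) : ℂ)

/-- the scaled interaction `v_N ∈ 𝒱_β`. -/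
def InteractionOK (β a R C0 δ : ℝ) (N : ℕ) (v : R3 → ℝ) : Prop :=
  Measurable v ∧ (∀ x, 0 ≤ v x) ∧ (∀ x y : R3, ‖x‖ = ‖y‖ → v x = v y) ∧
  (∀ x : R3, R * (N : ℝ) ^ (-β) < ‖x‖ → v x = 0) ∧
  (∀ x, v x ≤ C0 * (N : ℝ) ^ (-1 + 3 * β)) ∧
  |(∫ x : R3, v x) - a / N| ≤ C0 * (N : ℝ) ^ (-1 - δ)

/-- `α(Ψ) := ⟨Ψ, n̂ Ψ⟩`. -/
def alphaWF {N : ℕ} (p : Fin N → Op N) (Ψ : HN N) : ℝ :=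
  (inner ℂ Ψ ((fhat p (nfun N)) Ψ) : ℂ).re

/-- `‖∇_j f(x)‖²`, the squared gradient in the `j`-th variable. -/
def grad1Sq (N : ℕ) (j : Fin N) (f : NBody N → ℂ) (x : NBody N) : ℝ :=
  ‖fderiv ℝ (fun y : R3 => f (Function.update x j y)) (x j)‖ ^ 2

/-- a function representative of `q_j Ψ`. -/
def q1Fun (N : ℕ) (j : Fin N) (φf : R3 → ℂ) (f : NBody N → ℂ) : NBody N → ℂ :=
  fun x => f x - φf (x j) * ∫ y : R3, conj (φf y) * f (Function.update x j y)

/-- `𝒮_j`, the region where particle `j` is at distance `≥ N^{-26/27}` from all others. -/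
def S1Set (N : ℕ) (j : Fin N) : Set (NBody N) :=
  {x | ∀ k, k ≠ j → (N : ℝ) ^ (-(26 / 27 : ℝ)) ≤ dist (x j) (x k)}

/-- the Laplacian on `ℝ³`. -/
def lap3 {E : Type*} [NormedAddCommGroup E] [NormedSpace ℝ E] (f : R3 → E) (x : R3) : E :=
  ∑ i : Fin 3, fderiv ℝ (fun y => fderiv ℝ f y (EuclideanSpace.single i 1)) x
    (EuclideanSpace.single i 1)

/-- the Laplacian on `ℝ^{3N}`. -/
def lapN (N : ℕ) (f : NBody N → ℂ) (x : NBody N) : ℂ :=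
  ∑ j : Fin N, ∑ i : Fin 3,
    fderiv ℝ (fun y => fderiv ℝ f y (Pi.single j (EuclideanSpace.single i 1))) x
      (Pi.single j (EuclideanSpace.single i 1))

/-- the Gross–Pitaevskii energy functional. -/
def EGP (a : ℝ) (At : R3 → ℝ) (φf : R3 → ℂ) : ℝ :=
  (∫ x : R3, ‖fderiv ℝ φf x‖ ^ 2) + ∫ x : R3, (At x + a * ‖φf x‖ ^ 2) * ‖φf x‖ ^ 2


/-- the expectation `⟨Ψ, (n̂)^γ Ψ⟩` of the `γ`-th power of the relative particle number. -/
def momentWF {N : ℕ} (p : Fin N → Op N) (Ψ : HN N) (γ : ℝ) : ℝ :=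
  (inner ℂ Ψ ((fhat p (fun k => ((k : ℝ) / N) ^ (γ / 2 : ℝ))) Ψ) : ℂ).re

section Slicing

variable {ι α : Type*} [DecidableEq ι]

theorem Equiv.funSplitAt_symm_eq_update (j : ι) (x : ι → α) (y : α) :
    (Equiv.funSplitAt j α).symm (y, (Equiv.funSplitAt j α x).2) = Function.update x j y := by
  ext k
  by_cases h : k = j <;> simp [h]

theorem Equiv.funSplitAt_update_self_snd (j : ι) (x : ι → α) (y : α) :
    (Equiv.funSplitAt j α (Function.update x j y)).2 = (Equiv.funSplitAt j α x).2 := by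
  ext k
  simp [Function.update_of_ne k.2]

def MeasurableEquiv.funSplitAt (j : ι) (α : Type*) [MeasurableSpace α] :
    (ι → α) ≃ᵐ α × ({k // k ≠ j} → α) where
  toEquiv := Equiv.funSplitAt j α
  measurable_toFun :=
    (measurable_pi_apply j).prodMk (measurable_pi_lambda _ fun k => measurable_pi_apply k.1)
  measurable_invFun := measurable_pi_lambda _ fun k => by
    simp only [Equiv.funSplitAt_symm_apply]
    split_ifs <;> fun_prop

variable [Fintype ι] [MeasureSpace α] [SigmaFinite (volume : Measure α)]

theorem volume_preserving_funSplitAt (j : ι) :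
    MeasurePreserving (MeasurableEquiv.funSplitAt j α) := by
  let : Unique {k // ¬k ≠ j} := ⟨⟨j, not_not.2 rfl⟩, fun k => Subtype.ext (not_not.1 k.2)⟩
  convert ((volume_preserving_piUnique fun _ : {k // ¬k ≠ j} => α).prod
    (MeasurePreserving.id volume)).comp (Measure.measurePreserving_swap.comp
    (volume_preserving_piEquivPiSubtypeProd (fun _ : ι => α) (· ≠ j))) using 1 <;> rfl

theorem ae_ae_update {P : (ι → α) → Prop} (h : ∀ᵐ x, P x) (j : ι) :
    ∀ᵐ x, ∀ᵐ y, P (Function.update x j y) := by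
  have hsplit := volume_preserving_funSplitAt (α := α) j
  have hprod : ∀ᵐ z : α × ({k // k ≠ j} → α), P ((Equiv.funSplitAt j α).symm z) :=
    hsplit.symm.quasiMeasurePreserving.ae h
  have hrest : ∀ᵐ u : {k // k ≠ j} → α, ∀ᵐ y : α, P ((Equiv.funSplitAt j α).symm (y, u)) :=
    Measure.ae_ae_of_ae_prod (Measure.measurePreserving_swap.quasiMeasurePreserving.ae hprod)
  filter_upwards [(Measure.quasiMeasurePreserving_snd.comp hsplit.quasiMeasurePreserving).ae hrest]
    with x hx
  simp_rw [← Equiv.funSplitAt_symm_eq_update j x]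
  exact hx

theorem integral_eq_integral_funSplitAt_symm {E : Type*} [NormedAddCommGroup E]
    [NormedSpace ℝ E] {F : (ι → α) → E} (hF : Integrable F) (j : ι) :
    ∫ x, F x = ∫ u, ∫ y, F ((Equiv.funSplitAt j α).symm (y, u)) := by
  have hsplit := (volume_preserving_funSplitAt (α := α) j).symm
  rw [← hsplit.integral_comp' F]
  exact integral_prod_symm _
    ((hsplit.integrable_comp_emb (MeasurableEquiv.measurableEmbedding _)).2 hF)

end Slicing

section Idempotents

theorem completeOrthogonalIdempotents_prod_ite {R ι : Type*} [CommRing R] [Fintype ι]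
    [DecidableEq ι] {e : ι → R} (he : ∀ i, IsIdempotentElem (e i)) :
    CompleteOrthogonalIdempotents fun S : Finset ι => ∏ i, if i ∈ S then 1 - e i else e i where
  idem S := by
    rw [IsIdempotentElem, ← Finset.prod_mul_distrib]
    refine Finset.prod_congr rfl fun i _ => ?_
    split_ifs
    exacts [(he i).one_sub, he i]
  ortho S T hST := by
    obtain ⟨i, hi⟩ : ∃ i, ¬(i ∈ S ↔ i ∈ T) := by
      by_contra! h
      exact hST (Finset.ext h)
    rw [← Finset.prod_mul_distrib]
    refine Finset.prod_eq_zero (Finset.mem_univ i) ?_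
    by_cases hS : i ∈ S <;> simp only [hS, true_iff, false_iff] at hi <;>
      simp [hS, hi, sub_mul, mul_sub, (he i).eq]
  complete := by
    refine Eq.trans ?_ (Finset.prod_eq_one (s := Finset.univ) fun i _ => sub_add_cancel 1 (e i))
    rw [Fintype.prod_add]
    refine Finset.sum_congr rfl fun S _ => ?_
    rw [Finset.prod_ite]
    congr 2 <;> ext <;> simp

theorem OrthogonalIdempotents.sum_fiberwise {R I J : Type*} [Semiring R] [DecidableEq J]
    {e : I → R} (he : OrthogonalIdempotents e) (s : Finset I) (f : I → J) :
    OrthogonalIdempotents fun j => ∑ i ∈ s with f i = j, e i where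
  idem _ := he.isIdempotentElem_sum
  ortho j j' hjj' := by
    refine (Finset.sum_mul _ _ _).trans (Finset.sum_eq_zero fun i hi => he.mul_sum_of_notMem ?_)
    simp only [Finset.mem_filter] at hi ⊢
    exact fun h => hjj' (hi.2.symm.trans h.2)

variable {R : Type*} [Ring R]

open scoped IsMulCommutative in
theorem completeOrthogonalIdempotents_list_prod_ofFn {n : ℕ} {e : Fin n → R}
    (he : ∀ i, IsIdempotentElem (e i)) (hcomm : ∀ i j, Commute (e i) (e j)) :
    CompleteOrthogonalIdempotents fun S : Finset (Fin n) =>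
      (List.ofFn fun i => if i ∈ S then 1 - e i else e i).prod := by
  let A := Subring.closure (Set.range e)
  have : IsMulCommutative A := Subring.isMulCommutative_closure (by
    rintro _ ⟨i, rfl⟩ _ ⟨j, rfl⟩
    exact hcomm i j)
  let e' : Fin n → A := fun i => ⟨e i, Subring.subset_closure ⟨i, rfl⟩⟩
  have h := (completeOrthogonalIdempotents_prod_ite (e := e')
    fun i => Subtype.ext (he i)).map A.subtype
  convert h using 2 with S
  rw [Function.comp_apply, ← List.prod_ofFn, map_list_prod, List.map_ofFn]
  refine congrArg (fun f => (List.ofFn f).prod) (funext fun i => ?_)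
  by_cases hi : i ∈ S <;> simp [hi, e']

variable [StarRing R]

theorem isSelfAdjoint_list_prod {l : List R} (hl : ∀ a ∈ l, IsSelfAdjoint a)
    (hcomm : l.Pairwise Commute) : IsSelfAdjoint l.prod := by
  induction l with
  | nil => exact .one R
  | cons a l ih =>
    rw [List.pairwise_cons] at hcomm
    have hl' : IsSelfAdjoint l.prod := ih (fun b hb => hl b (List.mem_cons_of_mem a hb)) hcomm.2
    rw [List.prod_cons, ← (hl a List.mem_cons_self).commute_iff hl']
    exact Commute.list_prod_right _ _ hcomm.1

theorem IsSelfAdjoint.commute_of_mul_mul_eq {p q : R} (hp : IsSelfAdjoint p)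
    (hq : IsSelfAdjoint q) (h : q * p * q = p * q) : Commute p q := by
  refine (hp.commute_iff hq).2 ?_
  rw [← h]
  simpa only [hq.star_eq] using hp.conjugate q

end Idempotents

section SpectralSums

variable {E : Type*} [NormedAddCommGroup E] [InnerProductSpace ℂ E] [CompleteSpace E]
  {ι : Type*} {P : ι → E →L[ℂ] E}

theorem re_inner_apply_self_of_isIdempotentElem {T : E →L[ℂ] E} (hidem : IsIdempotentElem T)
    (hsa : IsSelfAdjoint T) (x : E) : (inner ℂ x (T x)).re = ‖T x‖ ^ 2 := by
  calc (inner ℂ x (T x)).re = (inner ℂ x (T (T x))).re := by rw [← mul_apply_eq_comp, hidem.eq]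
    _ = ‖T x‖ ^ 2 := by
      rw [← ContinuousLinearMap.adjoint_inner_left, hsa.adjoint_eq]
      exact inner_self_eq_norm_sq (𝕜 := ℂ) _

theorem re_inner_sum_smul_apply (hidem : ∀ k, IsIdempotentElem (P k))
    (hsa : ∀ k, IsSelfAdjoint (P k)) (s : Finset ι) (f : ι → ℝ) (x : E) :
    (inner ℂ x ((∑ k ∈ s, (f k : ℂ) • P k) x)).re = ∑ k ∈ s, f k * ‖P k x‖ ^ 2 := by
  simp only [_root_.sum_apply, smul_apply, inner_sum, inner_smul_right, Complex.re_sum,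
    Complex.re_ofReal_mul, re_inner_apply_self_of_isIdempotentElem (hidem _) (hsa _)]

theorem sum_norm_sq_apply (hidem : ∀ k, IsIdempotentElem (P k)) (hsa : ∀ k, IsSelfAdjoint (P k))
    {s : Finset ι} (hsum : ∑ k ∈ s, P k = 1) (x : E) : ∑ k ∈ s, ‖P k x‖ ^ 2 = ‖x‖ ^ 2 := by
  have h := re_inner_sum_smul_apply hidem hsa s 1 x
  simp only [Pi.one_apply, Complex.ofReal_one, one_smul, one_mul, hsum] at h
  rw [← h, one_apply_eq_self]
  exact inner_self_eq_norm_sq (𝕜 := ℂ) _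

theorem norm_sum_smul_apply_sq [DecidableEq ι] (hP : OrthogonalIdempotents P)
    (hsa : ∀ k, IsSelfAdjoint (P k)) (s : Finset ι) (f : ι → ℝ) (x : E) :
    ‖(∑ k ∈ s, (f k : ℂ) • P k) x‖ ^ 2 = ∑ k ∈ s, f k ^ 2 * ‖P k x‖ ^ 2 := by
  set A := ∑ k ∈ s, (f k : ℂ) • P k
  have hA : IsSelfAdjoint A :=
    isSelfAdjoint_sum _ fun k _ => .smul (Complex.conj_ofReal (f k)) (hsa k)
  have hAA : A * A = ∑ k ∈ s, ((f k ^ 2 : ℝ) : ℂ) • P k := by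
    rw [Finset.sum_mul_sum]
    refine Finset.sum_congr rfl fun k hk => ?_
    rw [Finset.sum_eq_single_of_mem k hk fun l _ hlk => by
        rw [smul_mul_smul, hP.ortho hlk.symm, smul_zero],
      smul_mul_smul, (hP.idem k).eq]
    rw [Complex.ofReal_pow, sq]
  rw [← re_inner_sum_smul_apply hP.idem hsa, ← hAA, mul_apply_eq_comp,
    ← ContinuousLinearMap.adjoint_inner_left, hA.adjoint_eq]
  exact (inner_self_eq_norm_sq (𝕜 := ℂ) _).symm

end SpectralSums

section CondProj

variable {N : ℕ} {φ : H1}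

def fiberInner (φ : R3 → ℂ) (j : Fin N) (f : NBody N → ℂ) (u : {k // k ≠ j} → R3) : ℂ :=
  ∫ y, conj (φ y) * f ((Equiv.funSplitAt j R3).symm (y, u))

theorem integral_conj_mul_self_of_norm_eq_one (hφ : ‖φ‖ = 1) : ∫ y, conj (φ y) * φ y = 1 := by
  have h := inner_self_eq_norm_sq_to_K (𝕜 := ℂ) φ
  rw [L2.inner_def, hφ] at h
  simpa only [RCLike.inner_apply, mul_comm, RCLike.ofReal_one, one_pow] using h

variable {j : Fin N} {P : Op N}

theorem IsCondProj.ae_apply_eq (hP : IsCondProj N φ j P) (Ψ : HN N) :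
    ∀ᵐ x, P Ψ x = φ (x j) * fiberInner φ j Ψ (Equiv.funSplitAt j R3 x).2 := by
  filter_upwards [hP Ψ] with x hx
  simp_rw [fiberInner, Equiv.funSplitAt_symm_eq_update, hx]

theorem IsCondProj.apply_eq_self (hφ : ‖φ‖ = 1) (hP : IsCondProj N φ j P) {f : HN N}
    {G : NBody N → ℂ} (hG : ∀ x y, G (Function.update x j y) = G x)
    (hf : ∀ᵐ x, f x = φ (x j) * G x) : P f = f := by
  have hcoeff : ∀ᵐ x, ∫ y, conj (φ y) * f (Function.update x j y) = G x := by
    filter_upwards [ae_ae_update hf j] with x hx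
    calc ∫ y, conj (φ y) * f (Function.update x j y) = ∫ y, conj (φ y) * φ y * G x :=
          integral_congr_ae (by
            filter_upwards [hx] with y hy
            rw [hy, Function.update_self, hG]
            ring)
      _ = G x := by rw [integral_mul_const, integral_conj_mul_self_of_norm_eq_one hφ, one_mul]
  apply Lp.ext
  filter_upwards [hP f, hcoeff, hf] with x h₁ h₂ h₃
  rw [h₁, h₂, h₃]

theorem IsCondProj.isIdempotentElem (hφ : ‖φ‖ = 1) (hP : IsCondProj N φ j P) :
    IsIdempotentElem P :=
  ContinuousLinearMap.ext fun Ψ => hP.apply_eq_self hφ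
    (fun x y => by rw [Equiv.funSplitAt_update_self_snd]) (hP.ae_apply_eq Ψ)

theorem IsCondProj.inner_apply_left (hP : IsCondProj N φ j P) (Φ Ψ : HN N) :
    inner ℂ (P Φ) Ψ = ∫ u, conj (fiberInner φ j Φ u) * fiberInner φ j Ψ u := by
  have hcongr : (fun x => inner ℂ (P Φ x) (Ψ x)) =ᵐ[volume]
      fun x => conj (fiberInner φ j Φ (Equiv.funSplitAt j R3 x).2) * (conj (φ (x j)) * Ψ x) := by
    filter_upwards [hP.ae_apply_eq Φ] with x hx
    rw [hx, RCLike.inner_apply, map_mul]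
    ring
  rw [L2.inner_def, integral_congr_ae hcongr,
    integral_eq_integral_funSplitAt_symm ((L2.integrable_inner (P Φ) Ψ).congr hcongr) j]
  simp_rw [Equiv.apply_symm_apply, Equiv.funSplitAt_symm_apply, dif_pos, integral_const_mul]
  rfl

theorem IsCondProj.isSelfAdjoint (hP : IsCondProj N φ j P) : IsSelfAdjoint P := by
  refine ContinuousLinearMap.isSelfAdjoint_iff_isSymmetric.2 fun Φ Ψ => ?_
  rw [ContinuousLinearMap.coe_coe, hP.inner_apply_left, ← inner_conj_symm Φ (P Ψ),
    hP.inner_apply_left, ← integral_conj]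
  simp_rw [map_mul, RCLike.conj_conj, mul_comm]

theorem IsCondProj.apply_apply_of_ne {i : Fin N} {Q : Op N} (hφ : ‖φ‖ = 1) (hij : i ≠ j)
    (hQ : IsCondProj N φ i Q) (hP : IsCondProj N φ j P) {f : HN N} {G : NBody N → ℂ}
    (hG : ∀ x y, G (Function.update x j y) = G x) (hf : ∀ᵐ x, f x = φ (x j) * G x) :
    P (Q f) = Q f := by
  set H : NBody N → ℂ := fun x => ∫ y, conj (φ y) * G (Function.update x i y)
  have hQf : ∀ᵐ x, Q f x = φ (x j) * (φ (x i) * H x) := by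
    filter_upwards [hQ f, ae_ae_update hf i] with x h₁ h₂
    have : ∫ y, conj (φ y) * f (Function.update x i y) = φ (x j) * H x := by
      rw [← integral_const_mul]
      refine integral_congr_ae ?_
      filter_upwards [h₂] with y hy
      rw [hy, Function.update_of_ne hij.symm]
      ring
    rw [h₁, this]
    ring
  refine hP.apply_eq_self hφ (fun x y => ?_) hQf
  simp only [H, Function.update_of_ne hij, Function.update_comm hij.symm, hG]

theorem IsCondProj.commute {i : Fin N} {Q : Op N} (hφ : ‖φ‖ = 1) (hij : i ≠ j)
    (hQ : IsCondProj N φ i Q) (hP : IsCondProj N φ j P) : Commute Q P :=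
  hQ.isSelfAdjoint.commute_of_mul_mul_eq hP.isSelfAdjoint <| ContinuousLinearMap.ext fun Ψ =>
    hQ.apply_apply_of_ne hφ hij hP (fun x y => by rw [Equiv.funSplitAt_update_self_snd])
      (hP.ae_apply_eq Ψ)

end CondProj

theorem Pk_eq_sum {N : ℕ} (p : Fin N → Op N) (k : ℕ) :
    Pk p k = ∑ S : Finset (Fin N) with S.card = k,
      (List.ofFn fun i => if i ∈ S then qOp p i else p i).prod := by
  simp [Pk, Pjk, lastIdx]

section Pk

variable {N : ℕ} {φ : H1} {p : Fin N → Op N}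

theorem commute_of_isCondProj (hφ : ‖φ‖ = 1) (hp : ∀ j, IsCondProj N φ j (p j)) (i j : Fin N) :
    Commute (p i) (p j) := by
  obtain rfl | hij := eq_or_ne i j
  exacts [Commute.refl _, (hp i).commute hφ hij (hp j)]

theorem completeOrthogonalIdempotents_prod_qOp (hφ : ‖φ‖ = 1)
    (hp : ∀ j, IsCondProj N φ j (p j)) :
    CompleteOrthogonalIdempotents fun S : Finset (Fin N) =>
      (List.ofFn fun i => if i ∈ S then qOp p i else p i).prod :=
  completeOrthogonalIdempotents_list_prod_ofFn (fun i => (hp i).isIdempotentElem hφ)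
    (commute_of_isCondProj hφ hp)

theorem orthogonalIdempotents_Pk (hφ : ‖φ‖ = 1) (hp : ∀ j, IsCondProj N φ j (p j)) :
    OrthogonalIdempotents (Pk p) := by
  rw [show Pk p = _ from funext (Pk_eq_sum p)]
  exact (completeOrthogonalIdempotents_prod_qOp hφ hp).toOrthogonalIdempotents.sum_fiberwise
    Finset.univ Finset.card

theorem sum_range_Pk (hφ : ‖φ‖ = 1) (hp : ∀ j, IsCondProj N φ j (p j)) :
    ∑ k ∈ Finset.range (N + 1), Pk p k = 1 := by
  simp_rw [Pk_eq_sum]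
  refine (Finset.sum_fiberwise_of_maps_to (g := Finset.card) (fun S _ => ?_) _).trans
    (completeOrthogonalIdempotents_prod_qOp hφ hp).complete
  simpa [Nat.lt_succ_iff] using card_le_univ S

theorem isSelfAdjoint_Pk (hφ : ‖φ‖ = 1) (hp : ∀ j, IsCondProj N φ j (p j)) (k : ℕ) :
    IsSelfAdjoint (Pk p k) := by
  rw [Pk_eq_sum]
  refine isSelfAdjoint_sum _ fun S _ => isSelfAdjoint_list_prod ?_ ?_
  · simp only [List.mem_ofFn', Set.mem_range, forall_exists_index, forall_apply_eq_imp_iff]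
    intro i
    split_ifs
    exacts [.sub (.one _) (hp i).isSelfAdjoint, (hp i).isSelfAdjoint]
  · refine List.pairwise_ofFn.2 fun i j _ => ?_
    have h : Commute (p i) (p j) := commute_of_isCondProj hφ hp i j
    have h' : Commute (p i) (qOp p j) := (Commute.one_right _).sub_right h
    split_ifs
    exacts [(Commute.one_left _).sub_left h', (Commute.one_left _).sub_left h, h', h]

end Pk

section Moments

variable {N : ℕ} {φ : H1} {p : Fin N → Op N}

theorem momentWF_eq_sum (hφ : ‖φ‖ = 1) (hp : ∀ j, IsCondProj N φ j (p j)) (Ψ : HN N) (γ : ℝ) :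
    momentWF p Ψ γ = ∑ k ∈ Finset.range (N + 1), ((k : ℝ) / N) ^ (γ / 2) * ‖Pk p k Ψ‖ ^ 2 :=
  re_inner_sum_smul_apply (orthogonalIdempotents_Pk hφ hp).idem (isSelfAdjoint_Pk hφ hp) _ _ Ψ

theorem norm_fhat_nfun_apply_sq (hφ : ‖φ‖ = 1) (hp : ∀ j, IsCondProj N φ j (p j)) (Ψ : HN N) :
    ‖fhat p (nfun N) Ψ‖ ^ 2 = momentWF p Ψ 2 := by
  rw [fhat, norm_sum_smul_apply_sq (orthogonalIdempotents_Pk hφ hp) (isSelfAdjoint_Pk hφ hp),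
    momentWF_eq_sum hφ hp]
  refine Finset.sum_congr rfl fun k _ => ?_
  rw [nfun, Real.sq_sqrt (by positivity), div_self two_ne_zero, Real.rpow_one]

theorem momentWF_nonneg (hφ : ‖φ‖ = 1) (hp : ∀ j, IsCondProj N φ j (p j)) (Ψ : HN N) (γ : ℝ) :
    0 ≤ momentWF p Ψ γ := by
  rw [momentWF_eq_sum hφ hp]
  exact Finset.sum_nonneg fun k _ => by positivity

theorem momentWF_le_of_le (hφ : ‖φ‖ = 1) (hp : ∀ j, IsCondProj N φ j (p j)) (Ψ : HN N)
    {a b : ℝ} (hb : 0 ≤ b) (hba : b ≤ a) : momentWF p Ψ a ≤ momentWF p Ψ b := by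
  rw [momentWF_eq_sum hφ hp, momentWF_eq_sum hφ hp]
  refine Finset.sum_le_sum fun k hk => mul_le_mul_of_nonneg_right ?_ (sq_nonneg _)
  refine Real.rpow_le_rpow_of_exponent_ge' (by positivity) ?_ (by linarith) (by linarith)
  exact div_le_one_of_le₀ (by exact_mod_cast Finset.mem_range_succ_iff.1 hk) N.cast_nonneg

theorem momentWF_le_rpow (hφ : ‖φ‖ = 1) (hp : ∀ j, IsCondProj N φ j (p j)) {Ψ : HN N}
    (hΨ : ‖Ψ‖ = 1) {a b : ℝ} (ha : 0 < a) (hab : a ≤ b) :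
    momentWF p Ψ a ≤ momentWF p Ψ b ^ (a / b) := by
  have hw : ∑ k ∈ Finset.range (N + 1), ‖Pk p k Ψ‖ ^ 2 = 1 := by
    rw [sum_norm_sq_apply (orthogonalIdempotents_Pk hφ hp).idem (isSelfAdjoint_Pk hφ hp)
      (sum_range_Pk hφ hp), hΨ, one_pow]
  have hpow := Real.arith_mean_le_rpow_mean _ (fun k => ‖Pk p k Ψ‖ ^ 2)
    (fun k => ((k : ℝ) / N) ^ (a / 2)) (fun k _ => sq_nonneg _) hw (fun k _ => by positivity)
    ((one_le_div₀ ha).2 hab)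
  rw [one_div_div] at hpow
  rw [momentWF_eq_sum hφ hp, momentWF_eq_sum hφ hp]
  calc ∑ k ∈ Finset.range (N + 1), ((k : ℝ) / N) ^ (a / 2) * ‖Pk p k Ψ‖ ^ 2
      = ∑ k ∈ Finset.range (N + 1), ‖Pk p k Ψ‖ ^ 2 * ((k : ℝ) / N) ^ (a / 2) :=
        Finset.sum_congr rfl fun k _ => mul_comm _ _
    _ ≤ (∑ k ∈ Finset.range (N + 1), ‖Pk p k Ψ‖ ^ 2 * (((k : ℝ) / N) ^ (a / 2)) ^ (b / a))
        ^ (a / b) := hpow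
    _ = (∑ k ∈ Finset.range (N + 1), ((k : ℝ) / N) ^ (b / 2) * ‖Pk p k Ψ‖ ^ 2) ^ (a / b) := by
      refine congrArg (· ^ (a / b)) (Finset.sum_congr rfl fun k _ => ?_)
      rw [← Real.rpow_mul (by positivity), mul_comm]
      field_simp

theorem tendsto_momentWF_of_tendsto (hφ : ‖φ‖ = 1) {Ψ : (N : ℕ) → HN N}
    (hΨ : ∀ᶠ N in atTop, ‖Ψ N‖ = 1) {p : (N : ℕ) → Fin N → Op N}
    (hp : ∀ᶠ N in atTop, ∀ j, IsCondProj N φ j (p N j)) {a b : ℝ} (ha : 0 < a) (hb : 0 < b)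
    (h : Tendsto (fun N => momentWF (p N) (Ψ N) b) atTop (nhds 0)) :
    Tendsto (fun N => momentWF (p N) (Ψ N) a) atTop (nhds 0) := by
  have hnonneg : ∀ᶠ N in atTop, 0 ≤ momentWF (p N) (Ψ N) a :=
    hp.mono fun N hpN => momentWF_nonneg hφ hpN _ _
  rcases le_total a b with hab | hba
  · have hlim := h.rpow_const (p := a / b) (Or.inr (div_pos ha hb).le)
    rw [Real.zero_rpow (div_pos ha hb).ne'] at hlim
    exact squeeze_zero' hnonneg
      ((hp.and hΨ).mono fun N h => momentWF_le_rpow hφ h.1 h.2 ha hab) hlim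
  · exact squeeze_zero' hnonneg (hp.mono fun N hpN => momentWF_le_of_le hφ hpN _ hb.le hba) h

end Moments

/-- Equivalence of the moments of the relative particle number. -/
theorem moments_of_relative_particle_number_equivalent
    (φ : H1) (hφ : ‖φ‖ = 1)
    (Ψ : (N : ℕ) → HN N) (hΨ : ∀ N, 2 ≤ N → ‖Ψ N‖ = 1)
    (p : (N : ℕ) → Fin N → Op N)
    (hp : ∀ N, 2 ≤ N → ∀ j, IsCondProj N φ j (p N j)) :
    (∀ j l : ℝ, 0 < j → 0 < l →
      Tendsto (fun N => momentWF (p N) (Ψ N) l) atTop (nhds 0) →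
      Tendsto (fun N => momentWF (p N) (Ψ N) j) atTop (nhds 0)) ∧
    (∀ j : ℝ, 0 < j →
      (Tendsto (fun N => ‖(fhat (p N) (nfun N)) (Ψ N)‖) atTop (nhds 0) ↔
        Tendsto (fun N => momentWF (p N) (Ψ N) j) atTop (nhds 0))) := by
  have hΨ' : ∀ᶠ N in atTop, ‖Ψ N‖ = 1 := eventually_atTop.2 ⟨2, hΨ⟩
  have hp' : ∀ᶠ N in atTop, ∀ j, IsCondProj N φ j (p N j) := eventually_atTop.2 ⟨2, hp⟩
  have hmoments {j l : ℝ} (hj : 0 < j) (hl : 0 < l) :=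
    tendsto_momentWF_of_tendsto (a := j) (b := l) hφ hΨ' hp' hj hl
  have hnorm : (fun N => ‖fhat (p N) (nfun N) (Ψ N)‖ ^ 2) =ᶠ[atTop]
      fun N => momentWF (p N) (Ψ N) 2 :=
    hp'.mono fun N hpN => norm_fhat_nfun_apply_sq hφ hpN _
  refine ⟨fun j l hj hl => hmoments hj hl, fun j hj => ⟨fun h => ?_, fun h => ?_⟩⟩
  · exact hmoments hj two_pos (by simpa using (h.pow 2).congr' hnorm)
  · simpa [Real.sqrt_sq (norm_nonneg _)] using ((hmoments two_pos hj h).congr' hnorm.symm).sqrt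

end
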